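/- arXiv:2201.03419 — 4 statements merged into one kernel-verified Lean document; each statement's English description precedes it below -/
import Mathlib

section
/- Let Δ be a complete simplicial fan in ℝ^d with ray generators v_1,…,v_n, and for u ∈ ℝ^d let [u] ∈ ℝ^n be the coefficient vector of u in the generators of the minimal cone of Δ containing u (so u = Σ_i [u]_i v_i with at most d nonzero nonnegative coefficients, and h_{P(h)}(u) = ⟨h,[u]⟩ for all h with P(h) ∈ P(Δ)). Set c^Δ = max_{u ∈ S^{d−1}} max_i [u]_i. Then for all polytopes P(h), P(h') in the deformation cone P(Δ), the Hausdorff distance satisfies d_H(P(h), P(h')) ≤ √d · c^Δ · ‖h − h'‖. -/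
/-!
If `x ∈ A` lies at distance `r > 0` from a closed convex set `B` with nearest point `y`, then
the support function of `B` in the unit direction `u = (x - y) / r` is attained at `y`, so
`r = ⟪x, u⟫ - h_B(u) ≤ h_A(u) - h_B(u)`: support functions control the Hausdorff distance.
For `P(h)` and `P(h')` that difference is `⟪h - h', [u]⟫`, and `[u]` has at most `d` nonzero
entries, all in `[0, c]`, so `‖[u]‖ ≤ √d · c` and Cauchy–Schwarz finishes.
-/

open scoped RealInnerProductSpace

open Metric

section SupportFunction

variable {E : Type*} [NormedAddCommGroup E] [InnerProductSpace ℝ E]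

theorem convex_setOf_forall_inner_le {ι : Type*} (v : ι → E) (g : ι → ℝ) :
    Convex ℝ {x | ∀ i, ⟪v i, x⟫ ≤ g i} := by
  rw [Set.ofPred_forall]
  exact convex_iInter fun i => convex_halfSpace_le (innerₛₗ ℝ (v i)).isLinear (g i)

theorem isClosed_setOf_forall_inner_le {ι : Type*} (v : ι → E) (g : ι → ℝ) :
    IsClosed {x | ∀ i, ⟪v i, x⟫ ≤ g i} := by
  rw [Set.ofPred_forall]
  exact isClosed_iInter fun i => isClosed_le (continuous_const.inner continuous_id) continuous_const

variable [CompleteSpace E]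

theorem infDist_le_of_inner_le_support_add {B : Set E} (hconv : Convex ℝ B) (hcl : IsClosed B)
    {S : E → ℝ} (hS : ∀ u, IsLUB ((fun z => ⟪z, u⟫) '' B) (S u)) {x : E} {ε : ℝ} (hε : 0 ≤ ε)
    (hx : ∀ u, ‖u‖ = 1 → ⟪x, u⟫ ≤ S u + ε) :
    infDist x B ≤ ε := by
  obtain ⟨y, hyB, hy⟩ :=
    exists_norm_eq_iInf_of_complete_convex (hS 0).nonempty.of_image hcl.isComplete hconv x
  have hproj : ∀ w ∈ B, ⟪x - y, w - y⟫ ≤ 0 :=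
    (norm_eq_iInf_iff_real_inner_le_zero hconv hyB).1 hy
  refine (infDist_le_dist_of_mem hyB).trans ?_
  rw [dist_eq_norm]
  rcases eq_or_ne x y with rfl | hxy
  · simpa using hε
  set r := ‖x - y‖
  have hr : 0 < r := norm_pos_iff.2 (sub_ne_zero.2 hxy)
  set u := r⁻¹ • (x - y)
  have hu : ‖u‖ = 1 := norm_smul_inv_norm (sub_ne_zero.2 hxy)
  have hSu : S u ≤ ⟪y, u⟫ := by
    refine (hS u).2 ?_
    rintro _ ⟨w, hw, rfl⟩
    have : ⟪w, u⟫ - ⟪y, u⟫ = r⁻¹ * ⟪x - y, w - y⟫ := by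
      rw [← inner_sub_left, real_inner_smul_right, real_inner_comm]
    have := mul_nonpos_of_nonneg_of_nonpos (inv_nonneg.2 hr.le) (hproj w hw)
    linarith
  have hxu : ⟪x, u⟫ - ⟪y, u⟫ = r := by
    rw [← inner_sub_left, real_inner_smul_right, real_inner_self_eq_norm_sq]
    field_simp
    rfl
  linarith [hx u hu]

theorem hausdorffDist_le_of_abs_support_sub_le {A B : Set E} (hAconv : Convex ℝ A)
    (hAcl : IsClosed A) (hBconv : Convex ℝ B) (hBcl : IsClosed B) {SA SB : E → ℝ}
    (hSA : ∀ u, IsLUB ((fun z => ⟪z, u⟫) '' A) (SA u))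
    (hSB : ∀ u, IsLUB ((fun z => ⟪z, u⟫) '' B) (SB u)) {ε : ℝ} (hε : 0 ≤ ε)
    (hS : ∀ u, ‖u‖ = 1 → |SA u - SB u| ≤ ε) :
    hausdorffDist A B ≤ ε := by
  refine hausdorffDist_le_of_infDist hε (fun x hx => ?_) (fun x hx => ?_)
  · refine infDist_le_of_inner_le_support_add hBconv hBcl hSB hε fun u hu => ?_
    linarith [(hSA u).1 ⟨x, hx, rfl⟩, (abs_le.1 (hS u hu)).2]
  · refine infDist_le_of_inner_le_support_add hAconv hAcl hSA hε fun u hu => ?_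
    linarith [(hSB u).1 ⟨x, hx, rfl⟩, (abs_le.1 (hS u hu)).1]

end SupportFunction

theorem EuclideanSpace.norm_le_sqrt_mul_of_card_support_le {ι : Type*} [Fintype ι]
    {w : EuclideanSpace ℝ ι} {d : ℕ} {c : ℝ} (hc : 0 ≤ c) (hw : ∀ i, |w i| ≤ c)
    (hd : (Finset.univ.filter fun i => w i ≠ 0).card ≤ d) :
    ‖w‖ ≤ Real.sqrt d * c := by
  rw [EuclideanSpace.norm_eq, ← Real.sqrt_sq hc, ← Real.sqrt_mul (Nat.cast_nonneg d)]
  gcongr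
  calc ∑ i, ‖w i‖ ^ 2 = ∑ i ∈ Finset.univ.filter fun i => w i ≠ 0, ‖w i‖ ^ 2 :=
        (Finset.sum_filter_of_ne fun i _ hi => by simpa using hi).symm
    _ ≤ (Finset.univ.filter fun i => w i ≠ 0).card • c ^ 2 :=
        Finset.sum_le_card_nsmul _ _ _ fun i _ => by
          simpa using pow_le_pow_left₀ (abs_nonneg _) (hw i) 2
    _ ≤ d * c ^ 2 := by
        rw [nsmul_eq_mul]
        gcongr

theorem hausdorffDist_le_of_deformation_cone_general
    {d n : ℕ} (v : Fin n → EuclideanSpace ℝ (Fin d))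
    (br : EuclideanSpace ℝ (Fin d) → Fin n → ℝ)
    (hnonneg : ∀ u i, 0 ≤ br u i)
    (hsparse : ∀ u, (Finset.univ.filter fun i => br u i ≠ 0).card ≤ d)
    (c : ℝ)
    (hc : ∀ u ∈ Metric.sphere (0 : EuclideanSpace ℝ (Fin d)) 1, ∀ i, br u i ≤ c)
    (h h' : EuclideanSpace ℝ (Fin n))
    (P : EuclideanSpace ℝ (Fin n) → Set (EuclideanSpace ℝ (Fin d)))
    (hPdef : ∀ g, P g = {x | ∀ i, ⟪v i, x⟫ ≤ g i})
    (hsupp : ∀ u, IsLUB ((fun x => ⟪x, u⟫) '' P h) (∑ i, h i * br u i))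
    (hsupp' : ∀ u, IsLUB ((fun x => ⟪x, u⟫) '' P h') (∑ i, h' i * br u i)) :
    Metric.hausdorffDist (P h) (P h') ≤ Real.sqrt d * c * ‖h - h'‖ := by
  have hsum : ∀ (g : EuclideanSpace ℝ (Fin n)) u,
      ∑ i, g i * br u i = ⟪g, WithLp.toLp 2 (br u)⟫ := fun g u => by
    simp [PiLp.inner_apply, mul_comm]
  have hkey : ∀ u, ‖u‖ = 1 →
      |∑ i, h i * br u i - ∑ i, h' i * br u i| ≤ Real.sqrt d * c * ‖h - h'‖ := by
    intro u hu
    rcases isEmpty_or_nonempty (Fin n) with hn | ⟨⟨i₀⟩⟩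
    · simp [Subsingleton.elim h h']
    have hu' : u ∈ sphere 0 1 := by simpa using hu
    have hc0 : 0 ≤ c := (hnonneg u i₀).trans (hc u hu' i₀)
    have hbr : ‖WithLp.toLp 2 (br u)‖ ≤ Real.sqrt d * c :=
      EuclideanSpace.norm_le_sqrt_mul_of_card_support_le hc0
        (fun i => by simpa [abs_of_nonneg (hnonneg u i)] using hc u hu' i) (hsparse u)
    rw [hsum, hsum, ← inner_sub_left, mul_comm]
    exact (abs_real_inner_le_norm _ _).trans (by gcongr)
  have hε : 0 ≤ Real.sqrt d * c * ‖h - h'‖ := by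
    rcases Nat.eq_zero_or_pos d with rfl | hd
    · simp
    exact (abs_nonneg _).trans (hkey (EuclideanSpace.single ⟨0, hd⟩ 1) (by simp))
  refine hausdorffDist_le_of_abs_support_sub_le ?_ ?_ ?_ ?_ hsupp hsupp' hε hkey <;> rw [hPdef]
  exacts [convex_setOf_forall_inner_le _ _, isClosed_setOf_forall_inner_le _ _,
    convex_setOf_forall_inner_le _ _, isClosed_setOf_forall_inner_le _ _]

/-- Lemma 2.3: if `Δ` is a complete simplicial fan with ray generators `v_1, …, v_n`,
`[u] = br u` denotes the coefficient vector of `u` in the generators of its carrier cone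
(nonnegative, at most `d` nonzero entries, `u = Σ_i [u]_i v_i`), `c = c^Δ` bounds all
coordinates `[u]_i` for unit vectors `u`, and `P(h), P(h')` lie in the deformation cone
`P(Δ)` (so their support functions evaluate as `h_{P(h)}(u) = ⟨h,[u]⟩`), then
`d_H(P(h), P(h')) ≤ √d · c^Δ · ‖h − h'‖`. -/
theorem hausdorffDist_le_of_deformation_cone
    {d n : ℕ} (v : Fin n → EuclideanSpace ℝ (Fin d))
    (br : EuclideanSpace ℝ (Fin d) → Fin n → ℝ)
    (hrep : ∀ u, u = ∑ i, br u i • v i)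
    (hnonneg : ∀ u i, 0 ≤ br u i)
    (hsparse : ∀ u, (Finset.univ.filter fun i => br u i ≠ 0).card ≤ d)
    (c : ℝ)
    (hc : ∀ u ∈ Metric.sphere (0 : EuclideanSpace ℝ (Fin d)) 1, ∀ i, br u i ≤ c)
    (h h' : EuclideanSpace ℝ (Fin n))
    (P : EuclideanSpace ℝ (Fin n) → Set (EuclideanSpace ℝ (Fin d)))
    (hPdef : ∀ g, P g = {x | ∀ i, ⟪v i, x⟫ ≤ g i})
    (hsupp : ∀ u, IsLUB ((fun x => ⟪x, u⟫) '' P h) (∑ i, h i * br u i))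
    (hsupp' : ∀ u, IsLUB ((fun x => ⟪x, u⟫) '' P h') (∑ i, h' i * br u i)) :
    Metric.hausdorffDist (P h) (P h') ≤ Real.sqrt d * c * ‖h - h'‖ :=
  hausdorffDist_le_of_deformation_cone_general v br hnonneg hsparse c hc h h' P hPdef hsupp hsupp'
end

section
/- Let C ⊆ ℝ^n be a full-dimensional closed convex cone, A ∈ ℝ^{m×n}, and y ∈ relint(A(C)). Then the set argmin_{h ∈ C} ‖Ah − y‖ is a single point if and only if rank A = n. -/
/-!
Since `y ∈ A(C)`, the minimizers are exactly the points of `C ∩ A⁻¹{y}`, a single point when `A`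
is injective. Otherwise, relative interiority of `y` yields a preimage of `y` in the interior of
`C`, and moving it a little along a nonzero kernel vector of `A` gives a second one.
-/

open Filter Topology

theorem Matrix.rank_eq_card_iff_injective_mulVec {R ι κ : Type*} [Field R] [Fintype ι]
    [Fintype κ] (A : Matrix κ ι R) : A.rank = Fintype.card ι ↔ Function.Injective A.mulVec := by
  have := A.mulVecLin.finrank_range_add_finrank_ker
  rw [Module.finrank_fintype_fun_eq_card] at this
  rw [show Function.Injective A.mulVec ↔ Function.Injective A.mulVecLin from Iff.rfl,
    ← LinearMap.ker_eq_bot, ← Submodule.finrank_eq_zero, Matrix.rank]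
  omega

theorem sep_forall_norm_sub_le_eq_sep_eq {α F : Type*} [NormedAddCommGroup F] {f : α → F}
    {S : Set α} {y : F} (hy : y ∈ f '' S) :
    {h ∈ S | ∀ g ∈ S, ‖f h - y‖ ≤ ‖f g - y‖} = {h ∈ S | f h = y} := by
  obtain ⟨s, hs, rfl⟩ := hy
  ext h
  refine and_congr_right fun _ => ⟨fun hmin => ?_, fun hh g _ => by simp [hh]⟩
  simpa [sub_eq_zero] using hmin s hs

theorem eventually_add_smul_sub_mem_of_mem_intrinsicInterior {F : Type*} [AddCommGroup F]
    [Module ℝ F] [TopologicalSpace F] [IsTopologicalAddGroup F] [ContinuousSMul ℝ F]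
    {S : Set F} {y z : F} (hy : y ∈ intrinsicInterior ℝ S) (hz : z ∈ affineSpan ℝ S) :
    ∀ᶠ t in 𝓝 (0 : ℝ), y + t • (z - y) ∈ S := by
  obtain ⟨x, hx, rfl⟩ := hy
  let line : ℝ → affineSpan ℝ S := fun t =>
    ⟨t • (z - x) + x, AffineSubspace.smul_vsub_vadd_mem _ t hz x.2 x.2⟩
  have hline : Continuous line := by fun_prop
  have : line ⁻¹' interior ((↑) ⁻¹' S) ∈ 𝓝 0 :=
    hline.continuousAt.preimage_mem_nhds (isOpen_interior.mem_nhds (by simpa [line] using hx))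
  filter_upwards [this] with t ht
  simpa [line, add_comm] using interior_subset ht

section

variable {E F : Type*} [AddCommGroup E] [Module ℝ E] [TopologicalSpace E]
  [IsTopologicalAddGroup E] [ContinuousSMul ℝ E] [AddCommGroup F] [Module ℝ F]

theorem exists_ne_mem_fiber_of_mem_interior {C : Set E} {h : E} (hh : h ∈ interior C)
    {f : E →ₗ[ℝ] F} (hf : ¬ Function.Injective f) :
    ∃ h' ∈ C, f h' = f h ∧ h' ≠ h := by
  obtain ⟨v, hv, hv0⟩ := (Submodule.ne_bot_iff _).mp (mt LinearMap.ker_eq_bot.mp hf)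
  have hline : ∀ᶠ t in 𝓝 (0 : ℝ), h + t • v ∈ C := by
    apply (show Continuous fun t : ℝ => h + t • v by fun_prop).continuousAt.preimage_mem_nhds
    simpa using mem_interior_iff_mem_nhds.mp hh
  obtain ⟨t, ht, ht0⟩ := ((hline.filter_mono nhdsWithin_le_nhds).and
    (self_mem_nhdsWithin (s := {0}ᶜ))).exists
  have ht0 : t ≠ 0 := ht0
  exact ⟨h + t • v, ht, by simp [LinearMap.mem_ker.mp hv], by simpa [ht0] using hv0⟩

variable [TopologicalSpace F] [IsTopologicalAddGroup F] [ContinuousSMul ℝ F]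

/-- Moving `y` slightly away from `f x` stays in `f '' C`; the segment from `x` to a preimage `g`
of that point lies in the interior of `C`, and one of its points maps to `y`. -/
theorem Convex.exists_mem_interior_eq_of_mem_intrinsicInterior_image {C : Set E}
    (hC : Convex ℝ C) {x : E} (hx : x ∈ interior C) (f : E →ₗ[ℝ] F) {y : F}
    (hy : y ∈ intrinsicInterior ℝ (f '' C)) : ∃ h ∈ interior C, f h = y := by
  have hfx : f x ∈ affineSpan ℝ (f '' C) :=
    subset_affineSpan ℝ _ ⟨x, interior_subset hx, rfl⟩
  obtain ⟨t, ⟨g, hg, hfg⟩, ht⟩ :=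
    ((eventually_add_smul_sub_mem_of_mem_intrinsicInterior hy hfx).filter_mono
      nhdsWithin_le_nhds |>.and (self_mem_nhdsWithin (s := Set.Iio 0))).exists
  have ht : 0 < 1 - t := by linarith [show t < 0 from ht]
  refine ⟨(-t / (1 - t)) • x + (1 / (1 - t)) • g, hC.combo_interior_self_mem_interior hx hg
    (by field_simp; linarith) (by positivity) (by field_simp; ring), ?_⟩
  rw [map_add, map_smul, map_smul, hfg]
  match_scalars <;> field_simp <;> ring

theorem Convex.exists_sep_eq_singleton_iff_injective {C : Set E} (hC : Convex ℝ C)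
    (hCint : (interior C).Nonempty) (f : E →ₗ[ℝ] F) {y : F}
    (hy : y ∈ intrinsicInterior ℝ (f '' C)) :
    (∃ h₀, {h ∈ C | f h = y} = {h₀}) ↔ Function.Injective f := by
  constructor
  · rintro ⟨h₀, hfiber⟩
    by_contra hf
    obtain ⟨x, hx⟩ := hCint
    obtain ⟨h, hh, rfl⟩ := hC.exists_mem_interior_eq_of_mem_intrinsicInterior_image hx f hy
    obtain ⟨h', hh', hfh', hne⟩ := exists_ne_mem_fiber_of_mem_interior hh hf
    have hmem : ∀ {k}, k ∈ C → f k = f h → k = h₀ := fun hk hfk =>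
      (Set.ext_iff.mp hfiber _).mp ⟨hk, hfk⟩
    exact hne ((hmem hh' hfh').trans (hmem (interior_subset hh) rfl).symm)
  · intro hf
    obtain ⟨s, hs, rfl⟩ := intrinsicInterior_subset hy
    exact ⟨s, Set.eq_singleton_iff_unique_mem.mpr ⟨⟨hs, rfl⟩, fun h hh => hf hh.2⟩⟩

end

theorem unique_solution_iff_rank_general
    {m n : ℕ} (A : Matrix (Fin m) (Fin n) ℝ)
    (C : Set (EuclideanSpace ℝ (Fin n)))
    (hCconv : Convex ℝ C)
    (hCfull : (interior C).Nonempty)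
    (Amv : EuclideanSpace ℝ (Fin n) → EuclideanSpace ℝ (Fin m))
    (hAmv : ∀ h, (Amv h : Fin m → ℝ) = A.mulVec h)
    (y : EuclideanSpace ℝ (Fin m))
    (hy : y ∈ intrinsicInterior ℝ (Amv '' C)) :
    (∃ h₀, {h ∈ C | ∀ g ∈ C, ‖Amv h - y‖ ≤ ‖Amv g - y‖} = {h₀}) ↔ A.rank = n := by
  set L := Matrix.toLpLin 2 2 A
  have hL : ⇑L = Amv := funext fun h => WithLp.ofLp_injective 2 (by simp [L, hAmv])
  have hLinj : Function.Injective L ↔ Function.Injective A.mulVec :=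
    (Equiv.comp_injective _ (WithLp.equiv 2 _).symm).trans
      (Equiv.injective_comp (WithLp.equiv 2 _) _)
  rw [sep_forall_norm_sub_le_eq_sep_eq (intrinsicInterior_subset hy), ← hL,
    hCconv.exists_sep_eq_singleton_iff_injective hCfull L (hL ▸ hy), hLinj,
    ← A.rank_eq_card_iff_injective_mulVec, Fintype.card_fin]

/-- Proposition 3.5 (abstracted): let `C ⊆ ℝ^n` be a full-dimensional closed convex
cone, `A ∈ ℝ^{m×n}`, and `y` a point of the relative interior of `A(C)`. Then the
least-squares solution set `argmin_{h ∈ C} ‖Ah − y‖` is a single point if and only if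
`rank A = n`. -/
theorem unique_solution_iff_rank
    {m n : ℕ} (A : Matrix (Fin m) (Fin n) ℝ)
    (C : Set (EuclideanSpace ℝ (Fin n)))
    (hCcl : IsClosed C) (hCconv : Convex ℝ C)
    (hCcone : ∀ (c : ℝ), 0 < c → ∀ x ∈ C, c • x ∈ C)
    (hCfull : (interior C).Nonempty)
    (Amv : EuclideanSpace ℝ (Fin n) → EuclideanSpace ℝ (Fin m))
    (hAmv : ∀ h, (Amv h : Fin m → ℝ) = A.mulVec h)
    (y : EuclideanSpace ℝ (Fin m))
    (hy : y ∈ intrinsicInterior ℝ (Amv '' C)) :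
    (∃ h₀, {h ∈ C | ∀ g ∈ C, ‖Amv h - y‖ ≤ ‖Amv g - y‖} = {h₀}) ↔ A.rank = n :=
  unique_solution_iff_rank_general A C hCconv hCfull Amv hAmv y hy
end

section
/- Let G be a bipartite graph with parts [n] and [n], and let E_G be its Edmonds matrix, the n×n matrix over the polynomial ring ℝ[x_{ij} : 1 ≤ i,j ≤ n] with (E_G)_{ij} = x_{ij} if ij is an edge of G and 0 otherwise. Then G has a perfect matching if and only if det E_G is not the zero polynomial. -/
/-!
If `σ` is a perfect matching, evaluating the Edmonds matrix at the 0/1 indicator of the edges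
of `σ` gives the permutation matrix of `σ`, whose determinant `±1` is nonzero, so `det` was not
the zero polynomial. Conversely, if there is no perfect matching, every term
`sign σ • ∏ i, M (σ i) i` of the Leibniz expansion contains a zero entry.
-/

open MvPolynomial

namespace Matrix

variable {ι R : Type*} [CommRing R]

theorem det_eq_zero_of_forall_perm_exists_eq_zero [Fintype ι] [DecidableEq ι] (A : Matrix ι ι R)
    (h : ∀ σ : Equiv.Perm ι, ∃ i, A i (σ i) = 0) : A.det = 0 := by
  rw [det_apply]
  refine Finset.sum_eq_zero fun σ _ => ?_
  obtain ⟨i, hi⟩ := h σ⁻¹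
  refine smul_eq_zero_of_right _ (Finset.prod_eq_zero (Finset.mem_univ (σ⁻¹ i)) ?_)
  simpa using hi

variable (R) in
noncomputable def edmonds (E : ι → ι → Prop) [DecidableRel E] :
    Matrix ι ι (MvPolynomial (ι × ι) R) :=
  of fun i j => if E i j then X (i, j) else 0

variable {E : ι → ι → Prop} [DecidableRel E] [DecidableEq ι]

theorem edmonds_map_aeval_of_forall_adj {σ : Equiv.Perm ι} (hσ : ∀ i, E i (σ i)) :
    (edmonds R E).map (aeval fun p => if σ p.1 = p.2 then 1 else 0) = σ.permMatrix R := by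
  ext i j
  by_cases h : σ i = j
  · subst h
    simp [edmonds, hσ i]
  · simp only [edmonds, map_apply, of_apply]
    split_ifs <;> simp [PEquiv.toMatrix_apply, h]

variable [Fintype ι]

theorem det_edmonds_ne_zero_of_forall_adj [Nontrivial R] {σ : Equiv.Perm ι}
    (hσ : ∀ i, E i (σ i)) : (edmonds R E).det ≠ 0 := by
  intro hdet
  have hsign := AlgHom.map_det (aeval fun p => if σ p.1 = p.2 then (1 : R) else 0) (edmonds R E)
  rw [hdet, map_zero, AlgHom.mapMatrix_apply, edmonds_map_aeval_of_forall_adj hσ,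
    det_permutation] at hsign
  exact (Units.map (Int.castRingHom R : ℤ →* R) (Equiv.Perm.sign σ)).ne_zero hsign.symm

theorem det_edmonds_eq_zero_of_forall_exists_not_adj
    (h : ∀ σ : Equiv.Perm ι, ∃ i, ¬E i (σ i)) : (edmonds R E).det = 0 :=
  det_eq_zero_of_forall_perm_exists_eq_zero _ fun σ =>
    (h σ).imp fun i hi => by simp [edmonds, hi]

theorem exists_perm_forall_adj_iff_det_edmonds_ne_zero [Nontrivial R] :
    (∃ σ : Equiv.Perm ι, ∀ i, E i (σ i)) ↔ (edmonds R E).det ≠ 0 := by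
  refine ⟨fun ⟨σ, hσ⟩ => det_edmonds_ne_zero_of_forall_adj hσ, fun hdet => ?_⟩
  by_contra! h
  exact hdet (det_edmonds_eq_zero_of_forall_exists_not_adj h)

end Matrix

/-- Edmonds' theorem (Lemma 3.12): a bipartite graph `G` on `[n] ⊔ [n]`, given by its
edge relation `E`, has a perfect matching if and only if the determinant of its Edmonds
matrix — the `n×n` matrix over `ℝ[x_{ij}]` with entry `x_{ij}` if `ij ∈ E` and `0`
otherwise — is not the zero polynomial. -/
theorem perfect_matching_iff_edmonds_det_ne_zero
    {n : ℕ} (E : Fin n → Fin n → Prop) [DecidableRel E]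
    (M : Matrix (Fin n) (Fin n) (MvPolynomial (Fin n × Fin n) ℝ))
    (hM : ∀ i j, M i j = if E i j then X (i, j) else 0) :
    (∃ σ : Equiv.Perm (Fin n), ∀ i, E i (σ i)) ↔ M.det ≠ 0 := by
  obtain rfl : M = Matrix.edmonds ℝ E := Matrix.ext hM
  exact Matrix.exists_perm_forall_adj_iff_det_edmonds_ne_zero
end

section
/- Let A ∈ ℝ^{m×n}, let C ⊂ ℝ^m be a closed convex cone containing a point y_0 = A h_0, let y ∈ ℝ^m, let ŷ be the unique nearest point to y in C, and let ȳ be the orthogonal projection of y onto the column space A ℝ^n. If C ⊆ A ℝ^n, then ‖ŷ − y_0‖ ≤ ‖ȳ − y_0‖. -/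
open scoped RealInnerProductSpace

/-- Lemma 4.4 (first inequality): let `C ⊆ ℝ^m` be a closed convex cone contained in
the column space of `A` and containing `y₀ = A h₀`, let `ŷ` be the nearest point to `y`
in `C`, and let `ȳ` be the orthogonal projection of `y` onto the column space `Aℝ^n`.
Then `‖ŷ − y₀‖ ≤ ‖ȳ − y₀‖`. -/
theorem nearest_point_closer_than_projection
    {m n : ℕ} (A : Matrix (Fin m) (Fin n) ℝ)
    (Amv : EuclideanSpace ℝ (Fin n) → EuclideanSpace ℝ (Fin m))
    (hAmv : ∀ h, (Amv h : Fin m → ℝ) = A.mulVec h)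
    (C : Set (EuclideanSpace ℝ (Fin m)))
    (hCcl : IsClosed C) (hCconv : Convex ℝ C)
    (hCcone : ∀ (c : ℝ), 0 < c → ∀ x ∈ C, c • x ∈ C)
    (hCsub : ∀ z ∈ C, ∃ h, z = Amv h)
    (h₀ : EuclideanSpace ℝ (Fin n)) (y₀ : EuclideanSpace ℝ (Fin m))
    (hy₀ : y₀ = Amv h₀) (hy₀C : y₀ ∈ C)
    (y yhat ybar : EuclideanSpace ℝ (Fin m))
    (hyhat : yhat ∈ C ∧ ∀ z ∈ C, dist y yhat ≤ dist y z)
    (hbar : ∃ hb, ybar = Amv hb) (hperp : ∀ g, ⟪y - ybar, Amv g⟫ = 0) :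
    ‖yhat - y₀‖ ≤ ‖ybar - y₀‖ := by
  obtain ⟨hb, hbeq⟩ := hbar
  obtain ⟨hyhatC, hmin⟩ := hyhat
  -- y - ybar is orthogonal to ybar - z for z in column space
  have key : ∀ z ∈ C, ‖ybar - yhat‖ ≤ ‖ybar - z‖ := by
    intro z hz
    obtain ⟨h, hzeq⟩ := hCsub z hz
    obtain ⟨hh, hheq⟩ := hCsub yhat hyhatC
    have pyth : ∀ (w : EuclideanSpace ℝ (Fin m)), (∃ g, w = Amv g) →
        ‖y - w‖ ^ 2 = ‖y - ybar‖ ^ 2 + ‖ybar - w‖ ^ 2 := by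
      rintro w ⟨g, rfl⟩
      have horth : ⟪y - ybar, ybar - Amv g⟫ = 0 := by
        have h1 : ⟪y - ybar, ybar⟫ = 0 := by
          nth_rewrite 2 [hbeq]; exact hperp hb
        rw [inner_sub_right, h1, hperp g, sub_zero]
      have : y - Amv g = (y - ybar) + (ybar - Amv g) := by abel
      rw [this, norm_add_sq_real, horth]
      ring
    have h1 := pyth z ⟨h, hzeq⟩
    have h2 := pyth yhat ⟨hh, hheq⟩
    have hd : ‖y - yhat‖ ≤ ‖y - z‖ := by
      simpa [dist_eq_norm] using hmin z hz
    have hsq : ‖ybar - yhat‖ ^ 2 ≤ ‖ybar - z‖ ^ 2 := by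
      nlinarith [norm_nonneg (y - yhat), norm_nonneg (y - z)]
    nlinarith [norm_nonneg (ybar - yhat), norm_nonneg (ybar - z),
      sq_nonneg (‖ybar - yhat‖ - ‖ybar - z‖)]
  -- obtuse angle criterion
  have hinf : ‖ybar - yhat‖ = ⨅ w : C, ‖ybar - w‖ := by
    haveI : Nonempty C := ⟨⟨yhat, hyhatC⟩⟩
    apply le_antisymm
    · exact le_ciInf fun w => key w w.2
    · exact ciInf_le ⟨0, fun x ⟨w, hw⟩ => hw ▸ norm_nonneg _⟩ (⟨yhat, hyhatC⟩ : C)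
  have hobt : ∀ w ∈ C, ⟪ybar - yhat, w - yhat⟫ ≤ 0 :=
    (norm_eq_iInf_iff_real_inner_le_zero hCconv hyhatC).mp hinf
  have h0 := hobt y₀ hy₀C
  have expand : ‖ybar - y₀‖ ^ 2 = ‖ybar - yhat‖ ^ 2 + 2 * ⟪ybar - yhat, yhat - y₀⟫ + ‖yhat - y₀‖ ^ 2 := by
    have : ybar - y₀ = (ybar - yhat) + (yhat - y₀) := by abel
    rw [this, norm_add_sq_real]
  have hge : ⟪ybar - yhat, yhat - y₀⟫ ≥ 0 := by
    have : yhat - y₀ = -(y₀ - yhat) := by abel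
    rw [this, inner_neg_right]; linarith
  have : ‖yhat - y₀‖ ^ 2 ≤ ‖ybar - y₀‖ ^ 2 := by
    nlinarith [norm_nonneg (ybar - yhat)]
  nlinarith [norm_nonneg (yhat - y₀), norm_nonneg (ybar - y₀)]
end
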